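/- For the system η ẋ = Ax + Bv with A Hurwitz and v continuous, the deviation from the quasi-steady state x̄(t) = -A⁻¹Bv(t) satisfies: if v is Lipschitz with constant L_v, then limsup_{t→∞} ‖x(t) - x̄(t)‖ ≤ η·K for a constant K depending on A, B, L_v, so the deviation is O(η). -/

import Mathlib

open Matrix Filter

section Helpers

attribute [local instance] Matrix.linftyOpSemiNormedRing Matrix.linftyOpNormedRing
  Matrix.linftyOpNormedAlgebra

private lemma exp_deriv_aux (n : ℕ) (A : Matrix (Fin n) (Fin n) ℝ) (b r s : ℝ) :
    HasDerivAt (fun u : ℝ => NormedSpace.exp ((b + r * u) • A))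
      (r • (NormedSpace.exp ((b + r * s) • A) * A)) s := by
  have h1 := hasDerivAt_exp_smul_const (𝕂 := ℝ) A (b + r * s)
  have h2 : HasDerivAt (fun u : ℝ => b + r * u) r s := by
    simpa using ((hasDerivAt_id s).const_mul r).const_add b
  exact h1.scomp s h2

private lemma exp_mul_exp_aux (n : ℕ) (A : Matrix (Fin n) (Fin n) ℝ) (a b : ℝ) :
    NormedSpace.exp (a • A) * NormedSpace.exp (b • A) = NormedSpace.exp ((a + b) • A) := by
  rw [add_smul]
  exact (NormedSpace.exp_add_of_commute (((Commute.refl A).smul_left a).smul_right b)).symm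

private lemma exp_zero_aux (n : ℕ) (A : Matrix (Fin n) (Fin n) ℝ) :
    NormedSpace.exp ((0 : ℝ) • A) = 1 := by
  rw [zero_smul]; exact NormedSpace.exp_zero

end Helpers

private lemma aux_texp (c u : ℝ) (hc : 0 < c) (hu : 0 ≤ u) :
    u * Real.exp (-(c * u)) ≤ (2 / c) * Real.exp (-(c / 2 * u)) := by
  have h1 : c / 2 * u ≤ Real.exp (c / 2 * u) :=
    (by linarith : c / 2 * u ≤ c / 2 * u + 1).trans (Real.add_one_le_exp _)
  have h2 : Real.exp (-(c * u)) = Real.exp (-(c / 2 * u)) * Real.exp (-(c / 2 * u)) := by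
    rw [← Real.exp_add]; ring_nf
  have h3 : Real.exp (-(c / 2 * u)) * Real.exp (c / 2 * u) = 1 := by
    rw [← Real.exp_add]; simp
  have hpos := Real.exp_pos (-(c / 2 * u))
  have h5 := mul_le_mul_of_nonneg_left h1 hpos.le
  rw [h3] at h5
  have h4 : u * Real.exp (-(c / 2 * u)) ≤ 2 / c := by
    rw [le_div_iff₀ hc]
    nlinarith [h5]
  calc u * Real.exp (-(c * u)) = (u * Real.exp (-(c / 2 * u))) * Real.exp (-(c / 2 * u)) := by
        rw [h2]; ring
    _ ≤ (2 / c) * Real.exp (-(c / 2 * u)) := mul_le_mul_of_nonneg_right h4 hpos.le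

set_option maxHeartbeats 1600000 in
/-- For η ẋ = Ax + Bv with A Hurwitz (‖e^{At}x‖ ≤ M e^{-αt}‖x‖) and v Lipschitz, the
deviation from the quasi-steady state x̄(t) = -A⁻¹Bv(t) is asymptotically O(η): there is a
constant K (depending on A, B, M, α, L_v, not on η or the trajectory) with
limsup_{t→∞} ‖x(t) + A⁻¹Bv(t)‖ ≤ η K. -/
theorem stmt_17 (n m : ℕ) (A : Matrix (Fin n) (Fin n) ℝ) (B : Matrix (Fin n) (Fin m) ℝ)
    (M α : ℝ) (hM : 0 < M) (hα : 0 < α)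
    (hHurwitz : ∀ μ : ℂ, μ ∈ spectrum ℂ (A.map (algebraMap ℝ ℂ)) → μ.re < 0)
    (hexp : ∀ t ≥ (0 : ℝ), ∀ ξ : Fin n → ℝ,
      ‖(NormedSpace.exp (t • A)).mulVec ξ‖ ≤ M * Real.exp (-α * t) * ‖ξ‖)
    (Lv : NNReal) (v : ℝ → Fin m → ℝ) (hv : LipschitzWith Lv v) :
    ∃ K > (0 : ℝ), ∀ η > (0 : ℝ), ∀ x : ℝ → Fin n → ℝ,
      (∀ t : ℝ, HasDerivAt x (η⁻¹ • (A.mulVec (x t) + B.mulVec (v t))) t) →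
      limsup (fun t => ‖x t + A⁻¹.mulVec (B.mulVec (v t))‖) atTop ≤ η * K := by
  classical
  letI : SeminormedRing (Matrix (Fin n) (Fin n) ℝ) := Matrix.linftyOpSemiNormedRing
  letI : NormedRing (Matrix (Fin n) (Fin n) ℝ) := Matrix.linftyOpNormedRing
  letI : NormedAlgebra ℝ (Matrix (Fin n) (Fin n) ℝ) := Matrix.linftyOpNormedAlgebra
  -- A is invertible
  have hdetA : IsUnit A.det := by
    rw [isUnit_iff_ne_zero]
    intro h0
    have hmem : (0 : ℂ) ∈ spectrum ℂ (A.map (algebraMap ℝ ℂ)) := by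
      rw [spectrum.mem_iff, map_zero, zero_sub]
      intro hu
      have hu' : IsUnit (A.map (algebraMap ℝ ℂ)) := by simpa using hu.neg
      have hd : IsUnit (A.map (algebraMap ℝ ℂ)).det :=
        (Matrix.isUnit_iff_isUnit_det _).mp hu'
      have : (A.map (algebraMap ℝ ℂ)).det = 0 := by
        rw [← RingHom.mapMatrix_apply, ← RingHom.map_det, h0, map_zero]
      rw [this] at hd
      exact not_isUnit_zero hd
    have := hHurwitz 0 hmem
    simp at this
  have hAAinv : A * A⁻¹ = 1 := Matrix.mul_nonsing_inv A hdetA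
  -- continuous linear maps
  let mv : Matrix (Fin n) (Fin n) ℝ →L[ℝ] (Fin n → ℝ) →L[ℝ] (Fin n → ℝ) :=
    LinearMap.toContinuousLinearMap
      (((LinearMap.toContinuousLinearMap :
          ((Fin n → ℝ) →ₗ[ℝ] (Fin n → ℝ)) ≃ₗ[ℝ] ((Fin n → ℝ) →L[ℝ] (Fin n → ℝ))).toLinearMap).comp
        (Matrix.toLin' : Matrix (Fin n) (Fin n) ℝ ≃ₗ[ℝ] _).toLinearMap)
  have mv_apply : ∀ (N : Matrix (Fin n) (Fin n) ℝ) (ξ : Fin n → ℝ), mv N ξ = N.mulVec ξ := by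
    intro N ξ
    simp [mv, Matrix.toLin'_apply]
  let mvB : (Fin m → ℝ) →L[ℝ] (Fin n → ℝ) := LinearMap.toContinuousLinearMap (Matrix.toLin' B)
  have mvB_apply : ∀ w, mvB w = B.mulVec w := fun w => by simp [mvB, Matrix.toLin'_apply]
  let mvAB : (Fin m → ℝ) →L[ℝ] (Fin n → ℝ) :=
    (LinearMap.toContinuousLinearMap (Matrix.toLin' A⁻¹)).comp mvB
  have mvAB_apply : ∀ w, mvAB w = A⁻¹.mulVec (B.mulVec w) := fun w => by
    simp [mvAB, mvB, Matrix.toLin'_apply]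
  set CB : ℝ := ‖mvB‖ with hCBdef
  have hCB0 : 0 ≤ CB := norm_nonneg _
  have hCB : ∀ w, ‖B.mulVec w‖ ≤ CB * ‖w‖ := fun w => by
    rw [← mvB_apply]; exact mvB.le_opNorm w
  set CA : ℝ := ‖mvAB‖ with hCAdef
  have hCA : ∀ w, ‖A⁻¹.mulVec (B.mulVec w)‖ ≤ CA * ‖w‖ := fun w => by
    rw [← mvAB_apply]; exact mvAB.le_opNorm w
  -- the constant
  refine ⟨4 * M * (CB + 1) * ((Lv : ℝ) + 1) / α ^ 2, by positivity, ?_⟩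
  intro η hη x hx
  set E : ℝ → Matrix (Fin n) (Fin n) ℝ := fun s => NormedSpace.exp (s • A) with hEdef
  set γ : ℝ := α * η⁻¹ with hγdef
  have hγ : 0 < γ := by positivity
  set K0 : ℝ := 4 * M * CB * (Lv : ℝ) / α ^ 2 with hK0def
  have hE_cont : Continuous E := by
    rw [continuous_iff_continuousAt]
    intro s
    have h := (exp_deriv_aux n A 0 1 s).continuousAt
    have heq : (fun u : ℝ => NormedSpace.exp ((0 + 1 * u) • A)) = E := by
      funext u; simp [hEdef]
    rwa [heq] at h
  have hEmul : ∀ a b : ℝ, E a * E b = E (a + b) := by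
    intro a b; simp only [hEdef]; exact exp_mul_exp_aux n A a b
  have hE0 : E 0 = 1 := by simp only [hEdef]; exact exp_zero_aux n A
  have hEexp : ∀ s : ℝ, 0 ≤ s → ∀ ξ, ‖mv (E s) ξ‖ ≤ M * Real.exp (-α * s) * ‖ξ‖ := by
    intro s hs ξ; rw [mv_apply]; exact hexp s hs ξ
  have hcomb : ∀ (a b : ℝ) (ξ : Fin n → ℝ), mv (E a) (mv (E b) ξ) = mv (E (a + b)) ξ := by
    intro a b ξ
    rw [mv_apply, mv_apply, mv_apply, Matrix.mulVec_mulVec, hEmul]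
  -- the key pointwise bound
  have key_bound : ∀ t : ℝ, 0 ≤ t → ‖x t + A⁻¹.mulVec (B.mulVec (v t))‖ ≤
      (M * (‖x 0‖ + CA * ‖v 0‖)) * Real.exp (-(γ * t))
        + (M * CA * (Lv : ℝ)) * (t * Real.exp (-(γ * t))) + η * K0 := by
    intro t ht
    -- derivative of s ↦ E(-(η⁻¹)s) ⬝ x s
    have hu : ∀ s : ℝ, HasDerivAt (fun s' => mv (E (-η⁻¹ * s')) (x s'))
        (η⁻¹ • mv (E (-η⁻¹ * s)) (B.mulVec (v s))) s := by
      intro s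
      have hEd : HasDerivAt (fun u : ℝ => E (-η⁻¹ * u)) ((-η⁻¹) • (E (-η⁻¹ * s) * A)) s := by
        have h := exp_deriv_aux n A 0 (-η⁻¹) s
        simp only [zero_add] at h
        exact h
      have hc : HasDerivAt (fun s' : ℝ => mv (E (-η⁻¹ * s')))
          (mv ((-η⁻¹) • (E (-η⁻¹ * s) * A))) s :=
        mv.hasFDerivAt.comp_hasDerivAt s hEd
      have h := hc.clm_apply (hx s)
      refine h.congr_deriv ?_
      simp only [_root_.map_smul, ContinuousLinearMap.smul_apply, mv_apply,
        ← Matrix.mulVec_mulVec, Matrix.mulVec_add, Matrix.mulVec_smul]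
      module
    have hBv_cont : Continuous (fun s => B.mulVec (v s)) := by
      have h : Continuous (fun s => mvB (v s)) := mvB.continuous.comp hv.continuous
      simpa only [mvB_apply] using h
    have hint1 : Continuous (fun s => η⁻¹ • mv (E (-η⁻¹ * s)) (B.mulVec (v s))) := by
      have h1 : Continuous (fun s : ℝ => mv (E (-η⁻¹ * s))) :=
        mv.continuous.comp (hE_cont.comp (continuous_const.mul continuous_id))
      exact (h1.clm_apply hBv_cont).fun_const_smul _
    have hftc1 : (∫ s in (0:ℝ)..t, η⁻¹ • mv (E (-η⁻¹ * s)) (B.mulVec (v s)))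
        = mv (E (-η⁻¹ * t)) (x t) - mv (E (-η⁻¹ * 0)) (x 0) :=
      intervalIntegral.integral_eq_sub_of_hasDerivAt (fun s _ => hu s)
        (hint1.intervalIntegrable 0 t)
    have e1 : η⁻¹ * t + -η⁻¹ * t = 0 := by ring
    have e2 : η⁻¹ * t + -η⁻¹ * 0 = η⁻¹ * t := by ring
    have h1 : x t = mv (E (η⁻¹ * t)) (x 0)
        + ∫ s in (0:ℝ)..t, η⁻¹ • mv (E (η⁻¹ * t + -η⁻¹ * s)) (B.mulVec (v s)) := by
      have h := congrArg (mv (E (η⁻¹ * t))) hftc1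
      rw [← ContinuousLinearMap.intervalIntegral_comp_comm _ (hint1.intervalIntegrable 0 t),
        map_sub] at h
      simp only [_root_.map_smul, hcomb] at h
      rw [e1, e2, hE0] at h
      have hone : mv (1 : Matrix (Fin n) (Fin n) ℝ) (x t) = x t := by
        rw [mv_apply, Matrix.one_mulVec]
      rw [hone] at h
      rw [h]
      abel
    -- matrix-valued FTC for the steady-state part
    have hgd : ∀ s : ℝ, HasDerivAt (fun s' => E (η⁻¹ * t + -η⁻¹ * s'))
        ((-η⁻¹) • (E (η⁻¹ * t + -η⁻¹ * s) * A)) s := fun s => exp_deriv_aux n A _ _ s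
    have hint2 : Continuous (fun s : ℝ => (-η⁻¹) • (E (η⁻¹ * t + -η⁻¹ * s) * A)) := by
      have hEc2 : Continuous (fun s : ℝ => E (η⁻¹ * t + -η⁻¹ * s)) :=
        hE_cont.comp (continuous_const.add (continuous_const.mul continuous_id))
      exact (hEc2.mul continuous_const).fun_const_smul _
    have hftc2 : (∫ s in (0:ℝ)..t, (-η⁻¹) • (E (η⁻¹ * t + -η⁻¹ * s) * A))
        = E (η⁻¹ * t + -η⁻¹ * t) - E (η⁻¹ * t + -η⁻¹ * 0) :=
      intervalIntegral.integral_eq_sub_of_hasDerivAt (fun s _ => hgd s)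
        (hint2.intervalIntegrable 0 t)
    have hAw : A.mulVec (A⁻¹.mulVec (B.mulVec (v t))) = B.mulVec (v t) := by
      rw [Matrix.mulVec_mulVec, hAAinv, Matrix.one_mulVec]
    have h2 : A⁻¹.mulVec (B.mulVec (v t)) = mv (E (η⁻¹ * t)) (A⁻¹.mulVec (B.mulVec (v t)))
        + ∫ s in (0:ℝ)..t, (-η⁻¹) • mv (E (η⁻¹ * t + -η⁻¹ * s)) (B.mulVec (v t)) := by
      have h := congrArg (mv.flip (A⁻¹.mulVec (B.mulVec (v t)))) hftc2
      rw [← ContinuousLinearMap.intervalIntegral_comp_comm _ (hint2.intervalIntegrable 0 t),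
        map_sub] at h
      simp only [_root_.map_smul, show ∀ N w, mv.flip w N = N.mulVec w from fun N w => mv_apply N w] at h
      simp only [Matrix.smul_mulVec] at h
      simp only [← Matrix.mulVec_mulVec] at h
      simp only [hAw] at h
      rw [e1, e2, hE0, Matrix.one_mulVec] at h
      simp only [← mv_apply] at h
      rw [h]
      simp only [mv_apply]
      abel
    -- integrability of the two integrands
    have hi1 : IntervalIntegrable
        (fun s => η⁻¹ • mv (E (η⁻¹ * t + -η⁻¹ * s)) (B.mulVec (v s))) MeasureTheory.volume 0 t := by
      have hc1 : Continuous (fun s : ℝ => mv (E (η⁻¹ * t + -η⁻¹ * s))) :=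
        mv.continuous.comp (hE_cont.comp (continuous_const.add (continuous_const.mul continuous_id)))
      exact ((hc1.clm_apply hBv_cont).fun_const_smul _).intervalIntegrable 0 t
    have hi2 : IntervalIntegrable
        (fun s => (-η⁻¹) • mv (E (η⁻¹ * t + -η⁻¹ * s)) (B.mulVec (v t))) MeasureTheory.volume 0 t := by
      have hc1 : Continuous (fun s : ℝ => mv (E (η⁻¹ * t + -η⁻¹ * s))) :=
        mv.continuous.comp (hE_cont.comp (continuous_const.add (continuous_const.mul continuous_id)))
      exact ((hc1.clm_apply continuous_const).fun_const_smul _).intervalIntegrable 0 t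
    have hI3 : (∫ s in (0:ℝ)..t, η⁻¹ • mv (E (η⁻¹ * t + -η⁻¹ * s)) (B.mulVec (v s) - B.mulVec (v t)))
        = (∫ s in (0:ℝ)..t, η⁻¹ • mv (E (η⁻¹ * t + -η⁻¹ * s)) (B.mulVec (v s)))
          + ∫ s in (0:ℝ)..t, (-η⁻¹) • mv (E (η⁻¹ * t + -η⁻¹ * s)) (B.mulVec (v t)) := by
      rw [← intervalIntegral.integral_add hi1 hi2]
      apply intervalIntegral.integral_congr
      intro s _
      simp only [_root_.map_sub, smul_sub, neg_smul, ← sub_eq_add_neg]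
    have hrep : x t + A⁻¹.mulVec (B.mulVec (v t))
        = mv (E (η⁻¹ * t)) (x 0 + A⁻¹.mulVec (B.mulVec (v t)))
          + ∫ s in (0:ℝ)..t, η⁻¹ • mv (E (η⁻¹ * t + -η⁻¹ * s)) (B.mulVec (v s) - B.mulVec (v t)) := by
      calc x t + A⁻¹.mulVec (B.mulVec (v t))
          = (mv (E (η⁻¹ * t)) (x 0)
              + ∫ s in (0:ℝ)..t, η⁻¹ • mv (E (η⁻¹ * t + -η⁻¹ * s)) (B.mulVec (v s)))
            + (mv (E (η⁻¹ * t)) (A⁻¹.mulVec (B.mulVec (v t)))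
              + ∫ s in (0:ℝ)..t, (-η⁻¹) • mv (E (η⁻¹ * t + -η⁻¹ * s)) (B.mulVec (v t))) := by
            rw [← h1, ← h2]
        _ = mv (E (η⁻¹ * t)) (x 0 + A⁻¹.mulVec (B.mulVec (v t)))
              + ∫ s in (0:ℝ)..t, η⁻¹ • mv (E (η⁻¹ * t + -η⁻¹ * s)) (B.mulVec (v s) - B.mulVec (v t)) := by
            rw [map_add, hI3]
            abel
    -- norm estimates
    set w : Fin n → ℝ := A⁻¹.mulVec (B.mulVec (v t)) with hwdef
    have hCA0 : 0 ≤ CA := by rw [hCAdef]; exact norm_nonneg _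
    have hvt : ‖v t‖ ≤ ‖v 0‖ + (Lv : ℝ) * t := by
      have hd := hv.dist_le_mul t 0
      have h0 : ‖v t‖ - ‖v 0‖ ≤ ‖v t - v 0‖ := norm_sub_norm_le _ _
      rw [dist_eq_norm, Real.dist_eq, sub_zero, abs_of_nonneg ht] at hd
      linarith
    have hterm1 : ‖mv (E (η⁻¹ * t)) (x 0 + w)‖
        ≤ (M * (‖x 0‖ + CA * ‖v 0‖)) * Real.exp (-(γ * t))
          + (M * CA * (Lv : ℝ)) * (t * Real.exp (-(γ * t))) := by
      have h := hEexp (η⁻¹ * t) (by positivity) (x 0 + w)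
      have harg : -α * (η⁻¹ * t) = -(γ * t) := by rw [hγdef]; ring
      rw [harg] at h
      have hnorm : ‖x 0 + w‖ ≤ ‖x 0‖ + CA * (‖v 0‖ + (Lv : ℝ) * t) := by
        refine (norm_add_le _ _).trans ?_
        have h2 : ‖w‖ ≤ CA * (‖v 0‖ + (Lv : ℝ) * t) :=
          (hCA (v t)).trans (mul_le_mul_of_nonneg_left hvt hCA0)
        linarith
      calc ‖mv (E (η⁻¹ * t)) (x 0 + w)‖ ≤ M * Real.exp (-(γ * t)) * ‖x 0 + w‖ := h
        _ ≤ M * Real.exp (-(γ * t)) * (‖x 0‖ + CA * (‖v 0‖ + (Lv : ℝ) * t)) :=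
            mul_le_mul_of_nonneg_left hnorm (by positivity)
        _ = (M * (‖x 0‖ + CA * ‖v 0‖)) * Real.exp (-(γ * t))
              + (M * CA * (Lv : ℝ)) * (t * Real.exp (-(γ * t))) := by ring
    set c : ℝ := η⁻¹ * M * CB * (Lv : ℝ) * (2 / γ) with hcdef
    have hc0 : 0 ≤ c := by
      rw [hcdef]
      exact mul_nonneg (mul_nonneg (mul_nonneg (mul_nonneg (inv_nonneg.mpr hη.le) hM.le) hCB0)
        Lv.coe_nonneg) (by positivity)
    have hptw : ∀ s ∈ Set.uIoc (0:ℝ) t,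
        ‖η⁻¹ • mv (E (η⁻¹ * t + -η⁻¹ * s)) (B.mulVec (v s) - B.mulVec (v t))‖
          ≤ c * Real.exp (-(γ / 2 * (t - s))) := by
      intro s hs
      rw [Set.uIoc_of_le ht] at hs
      have hts : 0 ≤ t - s := by linarith [hs.2]
      have harg : η⁻¹ * t + -η⁻¹ * s = η⁻¹ * (t - s) := by ring
      rw [harg, norm_smul, Real.norm_eq_abs, abs_of_pos (inv_pos.mpr hη)]
      have h1 := hEexp (η⁻¹ * (t - s)) (by positivity) (B.mulVec (v s) - B.mulVec (v t))
      have hBv : ‖B.mulVec (v s) - B.mulVec (v t)‖ ≤ CB * ((Lv : ℝ) * (t - s)) := by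
        rw [← Matrix.mulVec_sub]
        refine (hCB _).trans (mul_le_mul_of_nonneg_left ?_ hCB0)
        have hd := hv.dist_le_mul s t
        rw [dist_eq_norm, Real.dist_eq, abs_sub_comm, abs_of_nonneg hts] at hd
        exact hd
      have h2 : ‖mv (E (η⁻¹ * (t - s))) (B.mulVec (v s) - B.mulVec (v t))‖
          ≤ M * Real.exp (-α * (η⁻¹ * (t - s))) * (CB * ((Lv : ℝ) * (t - s))) :=
        h1.trans (mul_le_mul_of_nonneg_left hBv (by positivity))
      have harg2 : -α * (η⁻¹ * (t - s)) = -(γ * (t - s)) := by rw [hγdef]; ring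
      rw [harg2] at h2
      have haux := aux_texp γ (t - s) hγ hts
      calc η⁻¹ * ‖mv (E (η⁻¹ * (t - s))) (B.mulVec (v s) - B.mulVec (v t))‖
          ≤ η⁻¹ * (M * Real.exp (-(γ * (t - s))) * (CB * ((Lv : ℝ) * (t - s)))) :=
            mul_le_mul_of_nonneg_left h2 (by positivity)
        _ = (η⁻¹ * M * CB * (Lv : ℝ)) * ((t - s) * Real.exp (-(γ * (t - s)))) := by ring
        _ ≤ (η⁻¹ * M * CB * (Lv : ℝ)) * ((2 / γ) * Real.exp (-(γ / 2 * (t - s)))) := by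
            refine mul_le_mul_of_nonneg_left haux ?_
            exact mul_nonneg (mul_nonneg (mul_nonneg (inv_nonneg.mpr hη.le) hM.le) hCB0)
              Lv.coe_nonneg
        _ = c * Real.exp (-(γ / 2 * (t - s))) := by rw [hcdef]; ring
    have hceq : c / (γ / 2) = η * K0 := by
      rw [hcdef, hγdef, hK0def]
      field_simp
      ring
    have hgcont : Continuous (fun s : ℝ => c * Real.exp (-(γ / 2 * (t - s)))) := by
      apply continuous_const.mul
      exact Real.continuous_exp.comp (by continuity)
    have hIbound : ‖∫ s in (0:ℝ)..t,
        η⁻¹ • mv (E (η⁻¹ * t + -η⁻¹ * s)) (B.mulVec (v s) - B.mulVec (v t))‖ ≤ η * K0 := by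
      have hle := intervalIntegral.norm_integral_le_abs_of_norm_le (μ := MeasureTheory.volume)
        (MeasureTheory.ae_restrict_of_forall_mem (measurableSet_uIoc : MeasurableSet (Set.uIoc (0:ℝ) t)) hptw)
        (hgcont.intervalIntegrable 0 t)
      have hFd : ∀ s : ℝ, HasDerivAt (fun s' => (c / (γ / 2)) * Real.exp (-(γ / 2 * (t - s'))))
          (c * Real.exp (-(γ / 2 * (t - s)))) s := by
        intro s
        have hinner : HasDerivAt (fun s' : ℝ => -(γ / 2 * (t - s'))) (γ / 2) s := by
          have hlin : HasDerivAt (fun s' : ℝ => γ / 2 * s' - γ / 2 * t) (γ / 2) s := by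
            simpa using ((hasDerivAt_id s).const_mul (γ / 2)).sub_const (γ / 2 * t)
          have heq : (fun s' : ℝ => -(γ / 2 * (t - s'))) = (fun s' : ℝ => γ / 2 * s' - γ / 2 * t) := by
            funext s'; ring
          rw [heq]; exact hlin
        have hcomp := (Real.hasDerivAt_exp (-(γ / 2 * (t - s)))).comp s hinner
        have hmul := hcomp.const_mul (c / (γ / 2))
        refine hmul.congr_deriv ?_
        field_simp
      have hInt : (∫ s in (0:ℝ)..t, c * Real.exp (-(γ / 2 * (t - s))))
          = (c / (γ / 2)) * Real.exp (-(γ / 2 * (t - t)))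
            - (c / (γ / 2)) * Real.exp (-(γ / 2 * (t - 0))) :=
        intervalIntegral.integral_eq_sub_of_hasDerivAt (fun s _ => hFd s)
          (hgcont.intervalIntegrable 0 t)
      have he1 : Real.exp (-(γ / 2 * (t - t))) = 1 := by simp
      have hex := Real.exp_pos (-(γ / 2 * (t - 0)))
      have ha : 0 ≤ c / (γ / 2) := div_nonneg hc0 (by positivity)
      have hex1 : Real.exp (-(γ / 2 * (t - 0))) ≤ 1 := by
        rw [← Real.exp_zero]
        exact Real.exp_le_exp.mpr (by nlinarith)
      rw [hInt, he1, mul_one] at hle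
      rw [abs_of_nonneg (by nlinarith)] at hle
      calc ‖∫ s in (0:ℝ)..t,
          η⁻¹ • mv (E (η⁻¹ * t + -η⁻¹ * s)) (B.mulVec (v s) - B.mulVec (v t))‖
          ≤ c / (γ / 2) - (c / (γ / 2)) * Real.exp (-(γ / 2 * (t - 0))) := hle
        _ ≤ c / (γ / 2) := by nlinarith [hex.le, ha]
        _ = η * K0 := hceq
    calc ‖x t + w‖ = ‖mv (E (η⁻¹ * t)) (x 0 + w)
          + ∫ s in (0:ℝ)..t, η⁻¹ • mv (E (η⁻¹ * t + -η⁻¹ * s)) (B.mulVec (v s) - B.mulVec (v t))‖ := by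
          rw [← hrep]
      _ ≤ ‖mv (E (η⁻¹ * t)) (x 0 + w)‖ + ‖∫ s in (0:ℝ)..t,
            η⁻¹ • mv (E (η⁻¹ * t + -η⁻¹ * s)) (B.mulVec (v s) - B.mulVec (v t))‖ := norm_add_le _ _
      _ ≤ (M * (‖x 0‖ + CA * ‖v 0‖)) * Real.exp (-(γ * t))
            + (M * CA * (Lv : ℝ)) * (t * Real.exp (-(γ * t))) + η * K0 :=
          add_le_add hterm1 hIbound
  -- limsup part
  have hγt : Tendsto (fun t : ℝ => γ * t) atTop atTop := Tendsto.const_mul_atTop hγ tendsto_id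
  have hexp0 : Tendsto (fun t : ℝ => Real.exp (-(γ * t))) atTop (nhds 0) := by
    have h := (Real.tendsto_pow_mul_exp_neg_atTop_nhds_zero 0).comp hγt
    simpa [Function.comp_def] using h
  have htexp : Tendsto (fun t : ℝ => t * Real.exp (-(γ * t))) atTop (nhds 0) := by
    have h := ((Real.tendsto_pow_mul_exp_neg_atTop_nhds_zero 1).comp hγt).const_mul γ⁻¹
    rw [mul_zero] at h
    refine h.congr fun t => ?_
    simp only [Function.comp_def, pow_one]
    field_simp
  have hG : Tendsto (fun t : ℝ => (M * (‖x 0‖ + CA * ‖v 0‖)) * Real.exp (-(γ * t))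
      + (M * CA * (Lv : ℝ)) * (t * Real.exp (-(γ * t))) + η * K0) atTop (nhds (η * K0)) := by
    have h := ((hexp0.const_mul (M * (‖x 0‖ + CA * ‖v 0‖))).add
      (htexp.const_mul (M * CA * (Lv : ℝ)))).add_const (η * K0)
    simpa using h
  have hev : ∀ᶠ t in atTop, ‖x t + A⁻¹.mulVec (B.mulVec (v t))‖
      ≤ (M * (‖x 0‖ + CA * ‖v 0‖)) * Real.exp (-(γ * t))
        + (M * CA * (Lv : ℝ)) * (t * Real.exp (-(γ * t))) + η * K0 :=
    eventually_atTop.mpr ⟨0, key_bound⟩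
  have hcob : IsCoboundedUnder (· ≤ ·) atTop (fun t => ‖x t + A⁻¹.mulVec (B.mulVec (v t))‖) :=
    Filter.IsBoundedUnder.isCoboundedUnder_le
      (isBoundedUnder_of ⟨0, fun t => norm_nonneg _⟩)
  calc limsup (fun t => ‖x t + A⁻¹.mulVec (B.mulVec (v t))‖) atTop
      ≤ limsup (fun t : ℝ => (M * (‖x 0‖ + CA * ‖v 0‖)) * Real.exp (-(γ * t))
        + (M * CA * (Lv : ℝ)) * (t * Real.exp (-(γ * t))) + η * K0) atTop :=
        limsup_le_limsup hev hcob hG.isBoundedUnder_le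
    _ = η * K0 := hG.limsup_eq
    _ ≤ η * (4 * M * (CB + 1) * ((Lv : ℝ) + 1) / α ^ 2) := by
        refine mul_le_mul_of_nonneg_left ?_ hη.le
        rw [hK0def]
        gcongr <;> nlinarith [hCB0, Lv.coe_nonneg, hM.le]
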